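/- Let σ = z₁^{a₁} ⋯ z_{r−1}^{a_{r−1}} and τ = z_r ⋯ z_s be monomials in disjoint variables, and let α be a holomorphic k-form on ℂⁿ such that dσ ∧ α vanishes on the divisor {τ = 0} (i.e. its pullback to each {z_i = 0}, r ≤ i ≤ s, is zero). Then there exists a holomorphic k-form α' such that: (i) dσ ∧ α' = 0 identically; (ii) α' vanishes on the divisor {σ = 0}; and (iii) α − α' vanishes on the divisor {τ = 0}. -/

import Mathlib

open Complex

abbrev Pt (n : ℕ) := Fin n → ℂ
abbrev Idx (n k : ℕ) := {s : Finset (Fin n) // s.card = k}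
abbrev Form (n k : ℕ) := Idx n k → Pt n → ℂ

/-- A form is holomorphic on `Ω` if all its coefficient functions are. -/
def HoloOn {n k : ℕ} (Ω : Set (Pt n)) (α : Form n k) : Prop :=
  ∀ s, DifferentiableOn ℂ (α s) Ω

/-- Wedge product of a `1`-form with coefficients `ω` with a `k`-form `α`. -/
noncomputable def wedge1 {n k : ℕ} (ω : Fin n → Pt n → ℂ) (α : Form n k) : Form n (k + 1) :=
  fun t z => ∑ j ∈ t.1.attach,
    (-1 : ℂ) ^ ((t.1.filter (fun i => i < j.1)).card) * ω j.1 z *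
      α ⟨t.1.erase j.1, by rw [Finset.card_erase_of_mem j.2, t.2]; omega⟩ z

/-- Pullback of `α` to the coordinate subspace `{z_i = 0, i ∈ J}`, extended constantly:
substitute `z_i = 0` and `dz_i = 0` for `i ∈ J`. -/
noncomputable def restrictJ {n k : ℕ} (J : Finset (Fin n)) (α : Form n k) : Form n k :=
  fun s z => if Disjoint s.1 J then α s (fun i => if i ∈ J then 0 else z i) else 0

/-- The (iterated) wedge `(⋀_{j ∈ J} dz_j/z_j) ∧ α`. -/
noncomputable def logWedge {n k r : ℕ} (J : Finset (Fin n)) (hJ : J.card = r) (α : Form n k) :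
    Form n (k + r) :=
  fun t z =>
    if h : J ⊆ t.1 then
      (∏ j ∈ J, (z j)⁻¹) * α ⟨t.1 \ J, by rw [Finset.card_sdiff_of_subset h, t.2, hJ]; omega⟩ z
    else 0

/-- `β` admits a holomorphic extension across `bad` on `Ω`. -/
def ExtendsHolo {n k : ℕ} (Ω : Set (Pt n)) (β : Form n k) (bad : Set (Pt n)) : Prop :=
  ∃ γ : Form n k, HoloOn Ω γ ∧ ∀ s, ∀ z ∈ Ω \ bad, γ s z = β s z

/-- Coefficients of the logarithmic differential `dσ/σ` of the monomial `z^a`. -/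
noncomputable def logCoef {n : ℕ} (a : Fin n → ℕ) : Fin n → Pt n → ℂ :=
  fun j z => (a j : ℂ) / z j

/-- Coefficients of the exterior derivative `dσ` of the monomial `σ = z^a`. -/
noncomputable def dMono {n : ℕ} (a : Fin n → ℕ) : Fin n → Pt n → ℂ :=
  fun j z => (a j : ℂ) * ∏ i, z i ^ (if i = j then a i - 1 else a i)

/-! Let `ρᵢ` be restriction to `{zᵢ = 0}` and put `α' = α - ∏_{i ∈ I} (1 - ρᵢ) α`. The `ρᵢ` are
commuting idempotents, and they commute with `dσ ∧ ·` because `σ` does not involve `zᵢ`. Hence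
`ρᵢ` kills `∏ (1 - ρᵢ) α`, which is (iii), and `∏ (1 - ρᵢ)` fixes `dσ ∧ α` by hypothesis, which
is (i). For (ii), multiply `dσ ∧ α' = 0` by `z₁ ⋯ zₙ` and divide by `σ` on the torus: by density
`∑_l a_l (∏_{m ≠ l} z_m) dz_l ∧ α' = 0` everywhere. On `{z_j = 0}` only the term `l = j`
survives, so `α'` vanishes there away from the other coordinate hyperplanes, hence everywhere by
density again. -/

open Finset

section
variable {n k : ℕ}

noncomputable def wedge1ₗ (ω : Fin n → Pt n → ℂ) : Form n k →ₗ[ℂ] Form n (k + 1) where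
  toFun := wedge1 ω
  map_add' α β := by
    ext t z
    simp only [wedge1, Pi.add_apply, mul_add, sum_add_distrib]
  map_smul' c α := by
    ext t z
    simp only [wedge1, Pi.smul_apply, smul_eq_mul, RingHom.id_apply, mul_sum]
    exact sum_congr rfl fun _ _ => by ring

@[simp] lemma wedge1ₗ_apply (ω : Fin n → Pt n → ℂ) (α : Form n k) : wedge1ₗ ω α = wedge1 ω α :=
  rfl

noncomputable def restrictJₗ (J : Finset (Fin n)) : Form n k →ₗ[ℂ] Form n k where
  toFun := restrictJ J
  map_add' α β := by
    ext t z
    simp only [restrictJ, Pi.add_apply]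
    split_ifs <;> simp
  map_smul' c α := by
    ext t z
    simp only [restrictJ, Pi.smul_apply, smul_eq_mul, RingHom.id_apply]
    split_ifs <;> simp

@[simp] lemma restrictJₗ_apply (J : Finset (Fin n)) (α : Form n k) :
    restrictJₗ J α = restrictJ J α :=
  rfl

lemma restrictJ_empty (α : Form n k) : restrictJ ∅ α = α := by
  ext t z
  simp [restrictJ]

lemma restrictJ_restrictJ (J J' : Finset (Fin n)) (α : Form n k) :
    restrictJ J (restrictJ J' α) = restrictJ (J ∪ J') α := by
  ext t z
  simp only [restrictJ, disjoint_union_right, mem_union]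
  split_ifs <;> simp_all
  congr 1
  funext i
  split_ifs <;> simp_all

lemma restrictJ_eq_zero_of_mem {J : Finset (Fin n)} {i : Fin n} (hi : i ∈ J) {γ : Form n k}
    (hγ : restrictJ {i} γ = 0) : restrictJ J γ = 0 := by
  rw [← union_eq_left.2 (singleton_subset_iff.2 hi), ← restrictJ_restrictJ, hγ,
    ← restrictJₗ_apply, map_zero]

/-- The expansion of `∏_{i ∈ I} (1 - restrictJ {i})` applied to `α`. -/
noncomputable def inclExcl (I : Finset (Fin n)) (α : Form n k) : Form n k :=
  ∑ J ∈ I.powerset, (-1 : ℂ) ^ J.card • restrictJ J α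

lemma restrictJ_inclExcl {I : Finset (Fin n)} {i : Fin n} (hi : i ∈ I) (α : Form n k) :
    restrictJ {i} (inclExcl I α) = 0 := by
  rw [← insert_erase hi, inclExcl, sum_powerset_insert (notMem_erase i I), ← sum_add_distrib,
    ← restrictJₗ_apply, map_sum]
  refine sum_eq_zero fun J hJ => ?_
  have hiJ : i ∉ J := fun h => notMem_erase i I (mem_powerset.1 hJ h)
  rw [map_add, map_smul, map_smul, restrictJₗ_apply, restrictJₗ_apply, restrictJ_restrictJ,
    restrictJ_restrictJ, ← insert_eq, ← insert_eq, insert_idem, card_insert_of_notMem hiJ,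
    pow_succ]
  simp

lemma inclExcl_eq_self {I : Finset (Fin n)} {γ : Form n k}
    (hγ : ∀ i ∈ I, restrictJ {i} γ = 0) : inclExcl I γ = γ := by
  rw [inclExcl, ← add_sum_erase _ _ (empty_mem_powerset I), card_empty, pow_zero, one_smul,
    restrictJ_empty, add_eq_left]
  refine sum_eq_zero fun J hJ => ?_
  obtain ⟨hJ, hJI⟩ := mem_erase.1 hJ
  obtain ⟨i, hi⟩ := nonempty_iff_ne_empty.2 hJ
  rw [restrictJ_eq_zero_of_mem hi (hγ i (mem_powerset.1 hJI hi)), smul_zero]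

lemma continuous_restrictJ (J : Finset (Fin n)) {α : Form n k} (hα : ∀ t, Continuous (α t))
    (t : Idx n k) : Continuous (restrictJ J α t) := by
  unfold restrictJ
  split_ifs
  · exact (hα t).comp (continuous_pi fun i => by split_ifs <;> fun_prop)
  · exact continuous_const

lemma differentiable_restrictJ (J : Finset (Fin n)) {α : Form n k}
    (hα : ∀ t, Differentiable ℂ (α t)) (t : Idx n k) : Differentiable ℂ (restrictJ J α t) := by
  unfold restrictJ
  split_ifs
  · exact (hα t).comp (differentiable_pi.2 fun i => by split_ifs <;> fun_prop)
  · exact differentiable_const 0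

lemma differentiable_inclExcl (I : Finset (Fin n)) {α : Form n k}
    (hα : ∀ t, Differentiable ℂ (α t)) (t : Idx n k) : Differentiable ℂ (inclExcl I α t) := by
  rw [inclExcl, Finset.sum_apply]
  exact Differentiable.sum fun J _ =>
    (differentiable_restrictJ J hα t).const_smul ((-1 : ℂ) ^ J.card)

end

section
variable {n k : ℕ} (a : Fin n → ℕ)

lemma dMono_eq_zero {l : Fin n} (hl : a l = 0) : dMono a l = 0 := by
  funext z
  simp [dMono, hl]

lemma dMono_restrict_eq {J : Finset (Fin n)} (hJ : ∀ i ∈ J, a i = 0) (l : Fin n) (z : Pt n) :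
    dMono a l (fun i => if i ∈ J then 0 else z i) = dMono a l z := by
  unfold dMono
  congr 1
  refine prod_congr rfl fun i _ => ?_
  by_cases hi : i ∈ J
  · simp [hi, hJ i hi]
  · simp [hi]

lemma wedge1_dMono_restrictJ {J : Finset (Fin n)} (hJ : ∀ i ∈ J, a i = 0) (β : Form n k) :
    wedge1 (dMono a) (restrictJ J β) = restrictJ J (wedge1 (dMono a) β) := by
  ext t z
  simp only [wedge1, restrictJ]
  by_cases hd : Disjoint t.1 J
  · rw [if_pos hd]
    refine sum_congr rfl fun j _ => ?_
    rw [if_pos (disjoint_of_subset_left (erase_subset _ _) hd), dMono_restrict_eq a hJ]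
  · rw [if_neg hd]
    refine sum_eq_zero fun j _ => ?_
    by_cases hjJ : j.1 ∈ J
    · simp [dMono_eq_zero a (hJ j.1 hjJ)]
    · obtain ⟨i, hit, hiJ⟩ := not_disjoint_iff.1 hd
      have hi : i ∈ t.1.erase j := mem_erase.2 ⟨fun h => hjJ (h ▸ hiJ), hit⟩
      rw [if_neg (not_disjoint_iff.2 ⟨i, hi, hiJ⟩), mul_zero]

lemma wedge1_dMono_inclExcl {I : Finset (Fin n)} (hI : ∀ i ∈ I, a i = 0) (α : Form n k) :
    wedge1 (dMono a) (inclExcl I α) = inclExcl I (wedge1 (dMono a) α) := by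
  simp only [inclExcl, ← wedge1ₗ_apply, map_sum, map_smul]
  refine sum_congr rfl fun J hJ => ?_
  rw [wedge1ₗ_apply, wedge1_dMono_restrictJ a fun i hi => hI i (mem_powerset.1 hJ hi),
    wedge1ₗ_apply]

end

section
variable {n k : ℕ}

lemma eq_zero_of_continuous_of_eq_zero_on_torus {f : Pt n → ℂ} (hf : Continuous f)
    (h : ∀ z : Pt n, (∀ i, z i ≠ 0) → f z = 0) : f = 0 :=
  hf.ext_on (dense_pi Set.univ fun _ _ => dense_compl_singleton 0) continuous_const
    fun z hz => h z fun i => hz i (Set.mem_univ i)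

lemma wedge1_mul_left (f : Pt n → ℂ) (ω : Fin n → Pt n → ℂ) (β : Form n k) (t : Idx n (k + 1))
    (z : Pt n) : wedge1 (fun l z => f z * ω l z) β t z = f z * wedge1 ω β t z := by
  simp only [wedge1, mul_sum]
  exact sum_congr rfl fun _ _ => by ring

lemma continuous_wedge1 {ω : Fin n → Pt n → ℂ} (hω : ∀ l, Continuous (ω l)) {β : Form n k}
    (hβ : ∀ t, Continuous (β t)) (t : Idx n (k + 1)) : Continuous (wedge1 ω β t) := by
  unfold wedge1
  fun_prop

lemma mul_dMono (a : Fin n → ℕ) (l : Fin n) (z : Pt n) :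
    z l * dMono a l z = a l * ∏ i, z i ^ a i := by
  by_cases hl : a l = 0
  · simp [dMono, hl]
  obtain ⟨m, hm⟩ := Nat.exists_eq_add_one_of_ne_zero hl
  rw [dMono, ← mul_prod_erase univ _ (mem_univ l),
    ← mul_prod_erase univ (fun i => z i ^ a i) (mem_univ l), if_pos rfl, hm, Nat.add_sub_cancel,
    prod_congr rfl fun i hi => by rw [if_neg (ne_of_mem_erase hi)]]
  ring

/-- `(z₁ ⋯ zₙ) · dσ/σ`, i.e. `logCoef a` with its denominators cleared. -/
noncomputable def clearedLogCoef (a : Fin n → ℕ) : Fin n → Pt n → ℂ :=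
  fun l z => a l * ∏ m ∈ univ.erase l, z m

lemma prod_mul_dMono (a : Fin n → ℕ) (l : Fin n) (z : Pt n) :
    (∏ m, z m) * dMono a l z = (∏ i, z i ^ a i) * clearedLogCoef a l z := by
  rw [← mul_prod_erase univ _ (mem_univ l), mul_right_comm, mul_dMono, clearedLogCoef]
  ring

lemma wedge1_clearedLogCoef_eq_zero (a : Fin n → ℕ) {β : Form n k}
    (hβ : ∀ t, Continuous (β t)) (h : wedge1 (dMono a) β = 0) :
    wedge1 (clearedLogCoef a) β = 0 := by
  ext t : 1
  refine eq_zero_of_continuous_of_eq_zero_on_torus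
    (continuous_wedge1 (fun l => by unfold clearedLogCoef; fun_prop) hβ t) fun z hz => ?_
  have hσ : ∏ i, z i ^ a i ≠ 0 := prod_ne_zero_iff.2 fun i _ => pow_ne_zero _ (hz i)
  refine (mul_eq_zero_iff_left hσ).1 ?_
  calc (∏ i, z i ^ a i) * wedge1 (clearedLogCoef a) β t z
      = wedge1 (fun l z => (∏ m, z m) * dMono a l z) β t z := by
        simp only [prod_mul_dMono, wedge1_mul_left]
    _ = 0 := by rw [wedge1_mul_left, h, Pi.zero_apply, Pi.zero_apply, mul_zero]

lemma eq_zero_of_wedge1_clearedLogCoef_eq_zero {a : Fin n → ℕ} {β : Form n k}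
    (h : wedge1 (clearedLogCoef a) β = 0) {j : Fin n} (haj : a j ≠ 0) {t : Idx n k}
    (hjt : j ∉ t.1) {z : Pt n} (hzj : z j = 0) (hz : ∀ m ≠ j, z m ≠ 0) : β t z = 0 := by
  have hu : (insert j t.1).card = k + 1 := by rw [card_insert_of_notMem hjt, t.2]
  have hrel := congrFun (congrFun h ⟨insert j t.1, hu⟩) z
  simp only [wedge1, Pi.zero_apply] at hrel
  rw [sum_eq_single_of_mem ⟨j, mem_insert_self j t.1⟩ (mem_attach _ _)] at hrel
  · have hβt : ∀ h, β ⟨(insert j t.1).erase j, h⟩ = β t :=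
      fun _ => congrArg β (Subtype.ext (erase_insert hjt))
    simp only [hβt] at hrel
    have hprod : ∏ m ∈ univ.erase j, z m ≠ 0 :=
      prod_ne_zero_iff.2 fun m hm => hz m (ne_of_mem_erase hm)
    simpa [clearedLogCoef, haj, hprod] using hrel
  · intro l _ hl
    have hjl : j ∈ univ.erase l.1 := mem_erase.2 ⟨fun h => hl (Subtype.ext h.symm), mem_univ j⟩
    simp [clearedLogCoef, prod_eq_zero hjl hzj]

lemma restrictJ_singleton_eq_zero_of_wedge1_dMono_eq_zero {a : Fin n → ℕ} {β : Form n k}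
    (hβ : ∀ t, Continuous (β t)) (h : wedge1 (dMono a) β = 0) {j : Fin n} (haj : a j ≠ 0) :
    restrictJ {j} β = 0 := by
  ext t : 1
  refine eq_zero_of_continuous_of_eq_zero_on_torus (continuous_restrictJ {j} hβ t) fun z hz => ?_
  unfold restrictJ
  split_ifs with hjt
  · exact eq_zero_of_wedge1_clearedLogCoef_eq_zero (wedge1_clearedLogCoef_eq_zero a hβ h) haj
      (disjoint_singleton_right.1 hjt) (by simp) fun m hm => by simp [hm, hz m]
  · rfl

end

theorem lemma7_general {n k : ℕ} (I : Finset (Fin n)) (a : Fin n → ℕ) (hdisj : ∀ i ∈ I, a i = 0)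
    (α : Form n k) (hα : ∀ t, Differentiable ℂ (α t))
    (hyp : ∀ i ∈ I, restrictJ {i} (wedge1 (dMono a) α) = 0) :
    ∃ α' : Form n k, (∀ t, Differentiable ℂ (α' t)) ∧
      wedge1 (dMono a) α' = 0 ∧
      (∀ j : Fin n, a j ≠ 0 → restrictJ {j} α' = 0) ∧
      (∀ i ∈ I, restrictJ {i} (α - α') = 0) := by
  have hα' : ∀ t, Differentiable ℂ ((α - inclExcl I α) t) :=
    fun t => (hα t).sub (differentiable_inclExcl I hα t)
  have hwedge : wedge1 (dMono a) (α - inclExcl I α) = 0 := by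
    rw [← wedge1ₗ_apply, map_sub, wedge1ₗ_apply, wedge1ₗ_apply, wedge1_dMono_inclExcl a hdisj,
      inclExcl_eq_self hyp, sub_self]
  refine ⟨α - inclExcl I α, hα', hwedge, fun j haj => ?_, fun i hi => ?_⟩
  · exact restrictJ_singleton_eq_zero_of_wedge1_dMono_eq_zero (fun t => (hα' t).continuous)
      hwedge haj
  · rw [sub_sub_cancel, restrictJ_inclExcl hi]

/-- Lemma 7 of the paper. Let `σ = z₁^{a₁} ⋯ z_{r−1}^{a_{r−1}}` and
`τ = z_r ⋯ z_s` be monomials in disjoint variables (`a i = 0` for `i ∈ I = {r, …, s}`),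
and let `α` be a holomorphic `k`-form on `ℂⁿ` such that `dσ ∧ α` vanishes on the divisor
`{τ = 0}` (its pullback to each `{z_i = 0}`, `i ∈ I`, is zero). Then there is a
holomorphic `k`-form `α'` with (i) `dσ ∧ α' = 0` identically, (ii) `α'` vanishes on the
divisor `{σ = 0}`, and (iii) `α − α'` vanishes on the divisor `{τ = 0}`. -/
theorem lemma7 {n k : ℕ} (r s : Fin n) (hrs : r ≤ s) (I : Finset (Fin n))
    (hI : I = Finset.Icc r s) (a : Fin n → ℕ) (hdisj : ∀ i ∈ I, a i = 0)
    (α : Form n k) (hα : ∀ t, Differentiable ℂ (α t))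
    (hyp : ∀ i ∈ I, restrictJ {i} (wedge1 (dMono a) α) = 0) :
    ∃ α' : Form n k, (∀ t, Differentiable ℂ (α' t)) ∧
      wedge1 (dMono a) α' = 0 ∧
      (∀ j : Fin n, a j ≠ 0 → restrictJ {j} α' = 0) ∧
      (∀ i ∈ I, restrictJ {i} (α - α') = 0) :=
  lemma7_general I a hdisj α hα hyp
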